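/- Let (H, I) be a crown in a graph G, i.e., I is an independent set, H = N(I), and there is a matching between H and I saturating all of H. Then mm(G) = mm(G - (H ∪ I)) + |H|. -/

import Mathlib

/-- A matching in a simple graph `G`, given as a finite set of edges of `G`
that are pairwise vertex-disjoint. -/
def IsMatching {V : Type*} (G : SimpleGraph V) (M : Finset (Sym2 V)) : Prop :=
  (∀ e ∈ M, e ∈ G.edgeSet) ∧
    ∀ e ∈ M, ∀ f ∈ M, e ≠ f → ∀ v, v ∈ e → v ∉ f

/-- The maximum cardinality of a matching in `G`. -/
noncomputable def mm {V : Type*} (G : SimpleGraph V) : ℕ :=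
  sSup {n | ∃ M : Finset (Sym2 V), IsMatching G M ∧ M.card = n}

/-- The graph obtained from `G` by deleting the vertices in `S`
(the deleted vertices become isolated, which does not affect matchings). -/
def deleteVerts {V : Type*} (G : SimpleGraph V) (S : Set V) : SimpleGraph V where
  Adj a b := G.Adj a b ∧ a ∉ S ∧ b ∉ S
  symm := ⟨fun _ _ ⟨h, ha, hb⟩ => ⟨h.symm, hb, ha⟩⟩
  loopless := ⟨fun a ⟨h, _, _⟩ => G.loopless.irrefl a h⟩

/-!
Every edge of `G` that meets `H ∪ I` has an endpoint in `H`, because `N(I) = H`. Hence in any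
matching of `G` the edges meeting `H ∪ I` number at most `|H|`, and the others form a matching of
`G - (H ∪ I)`; this gives `mm G ≤ mm (G - (H ∪ I)) + |H|`. Conversely, a maximum matching of
`G - (H ∪ I)` together with the crown matching, which lives inside `H ∪ I` and has at least `|H|`
edges, is a matching of `G`.
-/

open Finset

section Matchings

variable {V : Type*}

namespace IsMatching

variable {G : SimpleGraph V} {M N : Finset (Sym2 V)}

theorem empty (G : SimpleGraph V) : IsMatching G ∅ :=
  ⟨by simp, by simp⟩

theorem subset (hN : IsMatching G N) (hMN : M ⊆ N) : IsMatching G M :=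
  ⟨fun e he => hN.1 e (hMN he), fun e he f hf => hN.2 e (hMN he) f (hMN hf)⟩

theorem mono {G' : SimpleGraph V} (hM : IsMatching G M) (hGG' : G ≤ G') : IsMatching G' M :=
  ⟨fun e he => SimpleGraph.edgeSet_mono hGG' (hM.1 e he), hM.2⟩

theorem union [DecidableEq V] (hM : IsMatching G M) (hN : IsMatching G N)
    (hMN : ∀ e ∈ M, ∀ f ∈ N, ∀ v ∈ e, v ∉ f) : IsMatching G (M ∪ N) := by
  refine ⟨fun e he => (mem_union.1 he).elim (hM.1 e) (hN.1 e), fun e he f hf hef v hve => ?_⟩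
  rcases mem_union.1 he with he | he <;> rcases mem_union.1 hf with hf | hf
  · exact hM.2 e he f hf hef v hve
  · exact hMN e he f hf v hve
  · exact fun hvf => hMN f hf e he v hvf hve
  · exact hN.2 e he f hf hef v hve

theorem card_le_of_forall_exists_mem (hM : IsMatching G M) {T : Finset V}
    (hMT : ∀ e ∈ M, ∃ a ∈ T, a ∈ e) : M.card ≤ T.card :=
  card_le_card_of_forall_subsingleton (fun e a => a ∈ e) hMT
    fun a _ e ⟨he, hae⟩ f ⟨hf, haf⟩ => by_contra fun hef => hM.2 e he f hf hef a hae haf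

theorem deleteVerts (hM : IsMatching G M) {S : Set V} (hMS : ∀ e ∈ M, ∀ v ∈ e, v ∉ S) :
    IsMatching (deleteVerts G S) M := by
  refine ⟨fun e he => ?_, hM.2⟩
  induction e using Sym2.ind with
  | _ x y =>
    exact ⟨hM.1 _ he, hMS _ he x (Sym2.mem_mk_left x y), hMS _ he y (Sym2.mem_mk_right x y)⟩

end IsMatching

theorem deleteVerts_le (G : SimpleGraph V) (S : Set V) : deleteVerts G S ≤ G :=
  fun _ _ h => h.1

theorem notMem_of_mem_edgeSet_deleteVerts {G : SimpleGraph V} {S : Set V} {e : Sym2 V}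
    (he : e ∈ (deleteVerts G S).edgeSet) {v : V} (hv : v ∈ e) : v ∉ S := by
  induction e using Sym2.ind with
  | _ x y => rcases Sym2.mem_iff.1 hv with rfl | rfl; exacts [he.2.1, he.2.2]

section Finite

variable [Finite V]

theorem bddAbove_matching_cards (G : SimpleGraph V) :
    BddAbove {n | ∃ M : Finset (Sym2 V), IsMatching G M ∧ M.card = n} := by
  have := Fintype.ofFinite V
  classical
  refine ⟨Fintype.card (Sym2 V), ?_⟩
  intro n hn
  obtain ⟨M, -, rfl⟩ := hn
  exact card_le_univ M

theorem exists_isMatching_card_eq_mm (G : SimpleGraph V) :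
    ∃ M : Finset (Sym2 V), IsMatching G M ∧ M.card = mm G :=
  Nat.sSup_mem (s := {n | ∃ M : Finset (Sym2 V), IsMatching G M ∧ M.card = n})
    ⟨0, ∅, IsMatching.empty G, rfl⟩ (bddAbove_matching_cards G)

theorem IsMatching.card_le_mm {G : SimpleGraph V} {M : Finset (Sym2 V)} (hM : IsMatching G M) :
    M.card ≤ mm G :=
  le_csSup (bddAbove_matching_cards G) ⟨M, hM, rfl⟩

theorem mm_le_mm_deleteVerts_add (G : SimpleGraph V) (S : Set V) (T : Finset V)
    (hT : ∀ u v, G.Adj u v → u ∈ S → u ∈ T ∨ v ∈ T) :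
    mm G ≤ mm (deleteVerts G S) + T.card := by
  classical
  obtain ⟨N, hN, hcard⟩ := exists_isMatching_card_eq_mm G
  let avoidsS : Sym2 V → Prop := fun e => ∀ v ∈ e, v ∉ S
  have hfar : IsMatching (deleteVerts G S) (N.filter avoidsS) :=
    (hN.subset (filter_subset _ _)).deleteVerts fun e he => (mem_filter.1 he).2
  have hnear : (N.filter fun e => ¬ avoidsS e).card ≤ T.card := by
    refine (hN.subset (filter_subset _ _)).card_le_of_forall_exists_mem fun e he => ?_
    obtain ⟨heN, hmeets⟩ := mem_filter.1 he
    have hadj := hN.1 e heN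
    induction e using Sym2.ind with
    | _ x y =>
      simp only [avoidsS, not_forall, not_not, exists_prop] at hmeets
      obtain ⟨w, hw, hwS⟩ := hmeets
      rcases Sym2.mem_iff.1 hw with rfl | rfl
      · rcases hT w y hadj hwS with h | h
        exacts [⟨w, h, Sym2.mem_mk_left w y⟩, ⟨y, h, Sym2.mem_mk_right w y⟩]
      · rcases hT w x hadj.symm hwS with h | h
        exacts [⟨w, h, Sym2.mem_mk_right x w⟩, ⟨x, h, Sym2.mem_mk_left x w⟩]
  rw [← hcard, ← card_filter_add_card_filter_not avoidsS]
  exact add_le_add hfar.card_le_mm hnear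

theorem mm_deleteVerts_add_card_le (G : SimpleGraph V) (S : Set V) {M : Finset (Sym2 V)}
    (hM : IsMatching G M) (hMS : ∀ e ∈ M, ∀ v ∈ e, v ∈ S) :
    mm (deleteVerts G S) + M.card ≤ mm G := by
  classical
  obtain ⟨N, hN, hcard⟩ := exists_isMatching_card_eq_mm (deleteVerts G S)
  have hNM : ∀ e ∈ N, ∀ f ∈ M, ∀ v ∈ e, v ∉ f := fun e he f hf v hve hvf =>
    notMem_of_mem_edgeSet_deleteVerts (hN.1 e he) hve (hMS f hf v hvf)
  have hdisj : Disjoint N M := disjoint_left.2 fun e he heM =>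
    hNM e he e heM _ (Sym2.out_fst_mem e) (Sym2.out_fst_mem e)
  rw [← hcard, ← card_union_of_disjoint hdisj]
  exact ((hN.mono (deleteVerts_le G S)).union hM hNM).card_le_mm

end Finite

theorem disjoint_of_forall_mem_iff_exists_adj {G : SimpleGraph V} {H I : Finset V}
    (hind : ∀ a ∈ I, ∀ b ∈ I, ¬ G.Adj a b) (hN : ∀ b, b ∈ H ↔ ∃ a ∈ I, G.Adj a b) :
    Disjoint H I :=
  disjoint_left.2 fun b hbH hbI =>
    let ⟨a, haI, hab⟩ := (hN b).1 hbH
    hind a haI b hbI hab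

theorem card_le_card_of_forall_mem_edge {H I : Finset V} (hHI : Disjoint H I)
    {M : Finset (Sym2 V)} (hMbtw : ∀ e ∈ M, ∃ a ∈ H, ∃ b ∈ I, e = s(a, b))
    (hMsat : ∀ a ∈ H, ∃ e ∈ M, a ∈ e) : H.card ≤ M.card := by
  refine card_le_card_of_forall_subsingleton (fun a e => a ∈ e) hMsat
    fun e he x ⟨hxH, hxe⟩ y ⟨hyH, hye⟩ => ?_
  obtain ⟨a, -, b, hbI, rfl⟩ := hMbtw e he
  have hne : ∀ z ∈ H, z ≠ b := fun z hz hzb => disjoint_left.1 hHI hz (hzb ▸ hbI)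
  rw [Sym2.mem_iff] at hxe hye
  rw [hxe.resolve_right (hne x hxH), hye.resolve_right (hne y hyH)]

end Matchings

theorem stmt2_general {V : Type*} [Fintype V] (G : SimpleGraph V)
    (H I : Finset V)
    (hind : ∀ a ∈ I, ∀ b ∈ I, ¬ G.Adj a b)
    (hN : ∀ b, b ∈ H ↔ ∃ a ∈ I, G.Adj a b)
    (M : Finset (Sym2 V)) (hM : IsMatching G M)
    (hMbtw : ∀ e ∈ M, ∃ a ∈ H, ∃ b ∈ I, e = s(a, b))
    (hMsat : ∀ a ∈ H, ∃ e ∈ M, a ∈ e) :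
    mm G = mm (deleteVerts G (↑H ∪ ↑I)) + H.card := by
  have hHI : Disjoint H I := disjoint_of_forall_mem_iff_exists_adj hind hN
  have hMS : ∀ e ∈ M, ∀ v ∈ e, v ∈ (↑H ∪ ↑I : Set V) := by
    intro e he v hv
    obtain ⟨a, haH, b, hbI, rfl⟩ := hMbtw e he
    rcases Sym2.mem_iff.1 hv with rfl | rfl
    exacts [Or.inl haH, Or.inr hbI]
  refine le_antisymm (mm_le_mm_deleteVerts_add G _ H fun u v huv hu => ?_) ?_
  · exact hu.imp_right fun huI => (hN v).2 ⟨u, huI, huv⟩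
  · calc mm (deleteVerts G (↑H ∪ ↑I)) + H.card
        ≤ mm (deleteVerts G (↑H ∪ ↑I)) + M.card := by
          gcongr; exact card_le_card_of_forall_mem_edge hHI hMbtw hMsat
      _ ≤ mm G := mm_deleteVerts_add_card_le G _ hM hMS

/-- Crown rule: if `(H, I)` is a crown in `G` (that is, `I` is an independent set,
`H = N(I)`, and there is a matching `M` between `H` and `I` saturating all of `H`),
then `mm(G) = mm(G - (H ∪ I)) + |H|`. -/
theorem stmt2 {V : Type*} [Fintype V] [DecidableEq V] (G : SimpleGraph V)
    (H I : Finset V)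
    (hind : ∀ a ∈ I, ∀ b ∈ I, ¬ G.Adj a b)
    (hN : ∀ b, b ∈ H ↔ ∃ a ∈ I, G.Adj a b)
    (M : Finset (Sym2 V)) (hM : IsMatching G M)
    (hMbtw : ∀ e ∈ M, ∃ a ∈ H, ∃ b ∈ I, e = s(a, b))
    (hMsat : ∀ a ∈ H, ∃ e ∈ M, a ∈ e) :
    mm G = mm (deleteVerts G (↑H ∪ ↑I)) + H.card :=
  stmt2_general G H I hind hN M hM hMbtw hMsat
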